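/- arXiv:2004.05252 — 6 statements merged into one kernel-verified Lean document; each statement's English description precedes it below -/
import Mathlib

section
/- Let κ > 0 and let θ be a Kuramoto solution such that R(t) > 0 for all t in an interval I. Then R is differentiable on I and for all t ∈ I one has the growth estimate R'(t) ≥ κ·√(Δ(t))·( R(t)·√(Δ(t)) − D(Ω)/(2κ) ), equivalently R'(t) ≥ κ·R(t)·Δ(t) − (D(Ω)/2)·√(Δ(t)). -/
/-- A Kuramoto solution on ℝ. -/
def IsKuramoto {N : ℕ} (κ : ℝ) (ν : Fin N → ℝ) (θ : ℝ → Fin N → ℝ) : Prop :=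
  ∀ (i : Fin N) (t : ℝ), HasDerivAt (fun s => θ s i)
    (ν i + κ / N * ∑ j, Real.sin (θ t j - θ t i)) t

/-- Order parameter `R(x) = |(1/N) ∑ⱼ exp(i xⱼ)|`. -/
noncomputable def orderParam {N : ℕ} (x : Fin N → ℝ) : ℝ :=
  ‖(N : ℂ)⁻¹ * ∑ j, Complex.exp (Complex.I * (x j : ℂ))‖

/-- Diameter of natural frequencies `D(Ω) = max_{i,j} |νᵢ − νⱼ|`. -/
noncomputable def freqDiam {N : ℕ} (ν : Fin N → ℝ) : ℝ :=
  sSup {d : ℝ | ∃ i : Fin N, ∃ j : Fin N, d = |ν i - ν j|}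

/-! Write the complex order parameter as `Z = R e^{iφ}`. Taking imaginary parts of `e^{-ic} Z`
turns the coupling term into mean-field form, `θⱼ' = νⱼ - κ R sin(θⱼ - φ)`, and differentiating
`R = ‖Z‖` gives `R' = κ R Δ - (1/N) ∑ⱼ νⱼ sin(θⱼ - φ)`. The sines `sin(θⱼ - φ)` have mean zero
(the imaginary part of `e^{-iφ} Z = R`), so `νⱼ` may be replaced by `νⱼ - c` with `c` the midpoint
of the frequency range; then `|νⱼ - c| ≤ D/2`, and Cauchy–Schwarz bounds the drift term by
`(D/2) √Δ`. -/

open Finset Complex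
open scoped RealInnerProductSpace

theorem HasDerivAt.norm {F : Type*} [NormedAddCommGroup F] [InnerProductSpace ℝ F]
    {f : ℝ → F} {f' : F} {x : ℝ} (hf : HasDerivAt f f' x) (h0 : f x ≠ 0) :
    HasDerivAt (‖f ·‖) (⟪f x, f'⟫ / ‖f x‖) x := by
  have hpos : 0 < ‖f x‖ ^ 2 := by positivity
  convert hf.norm_sq.sqrt hpos.ne' using 1
  · simp [Real.sqrt_sq (norm_nonneg _)]
  · rw [Real.sqrt_sq (norm_nonneg _)]; ring

section ComplexOrderParam

variable {N : ℕ}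

noncomputable def complexOrderParam (x : Fin N → ℝ) : ℂ :=
  (N : ℂ)⁻¹ * ∑ j, cexp (I * (x j : ℂ))

lemma re_avg_mul_exp (w x : Fin N → ℝ) :
    ((N : ℂ)⁻¹ * ∑ j, (w j : ℂ) * cexp (I * (x j : ℂ))).re
      = (N : ℝ)⁻¹ * ∑ j, w j * Real.cos (x j) := by
  rw [show (N : ℂ)⁻¹ = ((N : ℝ)⁻¹ : ℝ) by push_cast; rfl, re_ofReal_mul, re_sum]
  simp [exp_re, exp_im]

lemma im_avg_mul_exp (w x : Fin N → ℝ) :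
    ((N : ℂ)⁻¹ * ∑ j, (w j : ℂ) * cexp (I * (x j : ℂ))).im
      = (N : ℝ)⁻¹ * ∑ j, w j * Real.sin (x j) := by
  rw [show (N : ℂ)⁻¹ = ((N : ℝ)⁻¹ : ℝ) by push_cast; rfl, im_ofReal_mul, im_sum]
  simp [exp_re, exp_im]

lemma complexOrderParam_re (x : Fin N → ℝ) :
    (complexOrderParam x).re = (N : ℝ)⁻¹ * ∑ j, Real.cos (x j) := by
  unfold complexOrderParam
  simpa only [Pi.one_apply, ofReal_one, one_mul] using re_avg_mul_exp 1 x

lemma complexOrderParam_im (x : Fin N → ℝ) :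
    (complexOrderParam x).im = (N : ℝ)⁻¹ * ∑ j, Real.sin (x j) := by
  unfold complexOrderParam
  simpa only [Pi.one_apply, ofReal_one, one_mul] using im_avg_mul_exp 1 x

lemma re_im_of_complexOrderParam_eq {x : Fin N → ℝ} {R φ : ℝ}
    (h : complexOrderParam x = R * cexp (I * φ)) :
    (N : ℝ)⁻¹ * ∑ j, Real.cos (x j) = R * Real.cos φ ∧
      (N : ℝ)⁻¹ * ∑ j, Real.sin (x j) = R * Real.sin φ := by
  rw [← complexOrderParam_re, ← complexOrderParam_im, h, re_ofReal_mul, im_ofReal_mul, mul_comm I,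
    exp_ofReal_mul_I_re, exp_ofReal_mul_I_im]
  exact ⟨rfl, rfl⟩

lemma avg_sin_sub_eq {x : Fin N → ℝ} {R φ : ℝ} (h : complexOrderParam x = R * cexp (I * φ))
    (c : ℝ) : (N : ℝ)⁻¹ * ∑ k, Real.sin (x k - c) = R * Real.sin (φ - c) := by
  obtain ⟨hcos, hsin⟩ := re_im_of_complexOrderParam_eq h
  simp only [Real.sin_sub, sum_sub_distrib, ← sum_mul]
  linear_combination Real.cos c * hsin - Real.sin c * hcos

lemma hasDerivAt_complexOrderParam {θ : ℝ → Fin N → ℝ} {v : Fin N → ℝ} {t : ℝ}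
    (hθ : ∀ j, HasDerivAt (θ · j) (v j) t) :
    HasDerivAt (fun s => complexOrderParam (θ s))
      (I * ((N : ℂ)⁻¹ * ∑ j, (v j : ℂ) * cexp (I * θ t j))) t := by
  refine ((HasDerivAt.fun_sum fun j _ => ((hθ j).ofReal_comp.const_mul I).cexp).const_mul
    (N : ℂ)⁻¹).congr_deriv ?_
  simp only [mul_sum]
  exact sum_congr rfl fun j _ => by ring

lemma inner_complexOrderParam_div_eq {x v : Fin N → ℝ} {R φ : ℝ}
    (h : complexOrderParam x = R * cexp (I * φ)) (hR : R ≠ 0) :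
    ⟪complexOrderParam x, I * ((N : ℂ)⁻¹ * ∑ j, (v j : ℂ) * cexp (I * x j))⟫ / R
      = -((N : ℝ)⁻¹ * ∑ j, v j * Real.sin (x j - φ)) := by
  obtain ⟨hcos, hsin⟩ := re_im_of_complexOrderParam_eq h
  rw [Complex.inner, mul_re, conj_re, conj_im, I_mul_re, I_mul_im, re_avg_mul_exp,
    im_avg_mul_exp, complexOrderParam_re, complexOrderParam_im, hcos, hsin]
  simp only [Real.sin_sub, mul_sub, sum_sub_distrib, ← mul_assoc, ← sum_mul]
  field_simp
  ring

lemma hasDerivAt_orderParam {θ : ℝ → Fin N → ℝ} {v : Fin N → ℝ} {t : ℝ}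
    (hθ : ∀ j, HasDerivAt (θ · j) (v j) t) (h0 : orderParam (θ t) ≠ 0) :
    HasDerivAt (fun s => orderParam (θ s))
      (⟪complexOrderParam (θ t), I * ((N : ℂ)⁻¹ * ∑ j, (v j : ℂ) * cexp (I * θ t j))⟫ /
        orderParam (θ t)) t :=
  (hasDerivAt_complexOrderParam hθ).norm (norm_ne_zero_iff.mp h0)

lemma kuramoto_field_eq_mean_field {x : Fin N → ℝ} {R φ : ℝ}
    (h : complexOrderParam x = R * cexp (I * φ)) (κ : ℝ) (ν : Fin N → ℝ) (i : Fin N) :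
    ν i + κ / N * ∑ j, Real.sin (x j - x i) = ν i - κ * R * Real.sin (x i - φ) := by
  rw [div_eq_mul_inv, mul_assoc, avg_sin_sub_eq h, ← neg_sub (x i) φ, Real.sin_neg]
  ring

end ComplexOrderParam

section FrequencySpread

variable {N : ℕ}

lemma freqDiam_nonneg (ν : Fin N → ℝ) : 0 ≤ freqDiam ν :=
  Real.sSup_nonneg (by rintro _ ⟨i, j, rfl⟩; exact abs_nonneg _)

lemma exists_abs_sub_le_freqDiam_half (ν : Fin N → ℝ) :
    ∃ c, ∀ j, |ν j - c| ≤ freqDiam ν / 2 := by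
  rcases isEmpty_or_nonempty (Fin N) with hN | hN
  · exact ⟨0, isEmptyElim⟩
  obtain ⟨iM, hM⟩ := Finite.exists_max ν
  obtain ⟨im, hm⟩ := Finite.exists_min ν
  have hspread : ν iM - ν im ≤ freqDiam ν := by
    refine le_csSup ⟨ν iM - ν im, ?_⟩ ⟨iM, im, (abs_of_nonneg (sub_nonneg.2 (hm iM))).symm⟩
    rintro _ ⟨i, j, rfl⟩
    exact abs_sub_le_iff.2 ⟨by linarith [hM i, hm j], by linarith [hM j, hm i]⟩
  exact ⟨(ν iM + ν im) / 2, fun j => abs_le.2 ⟨by linarith [hm j], by linarith [hM j]⟩⟩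

lemma avg_abs_le_sqrt_avg_sq (s : Fin N → ℝ) :
    (N : ℝ)⁻¹ * ∑ j, |s j| ≤ √((N : ℝ)⁻¹ * ∑ j, s j ^ 2) := by
  apply Real.le_sqrt_of_sq_le
  simpa [div_eq_inv_mul, sq_abs] using
    sum_div_card_sq_le_sum_sq_div_card (s := univ) (f := fun j => |s j|)

lemma avg_mul_le_freqDiam_half_mul_sqrt (ν s : Fin N → ℝ) (hs : (N : ℝ)⁻¹ * ∑ j, s j = 0) :
    (N : ℝ)⁻¹ * ∑ j, ν j * s j ≤ freqDiam ν / 2 * √((N : ℝ)⁻¹ * ∑ j, s j ^ 2) := by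
  obtain ⟨c, hc⟩ := exists_abs_sub_le_freqDiam_half ν
  calc (N : ℝ)⁻¹ * ∑ j, ν j * s j = (N : ℝ)⁻¹ * ∑ j, (ν j - c) * s j := by
        simp only [sub_mul, sum_sub_distrib, ← mul_sum]
        linear_combination c * hs
    _ ≤ (N : ℝ)⁻¹ * ∑ j, freqDiam ν / 2 * |s j| := by
        refine mul_le_mul_of_nonneg_left (sum_le_sum fun j _ => ?_) (by positivity)
        exact (le_abs_self _).trans
          ((abs_mul _ _).trans_le (mul_le_mul_of_nonneg_right (hc j) (abs_nonneg _)))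
    _ = freqDiam ν / 2 * ((N : ℝ)⁻¹ * ∑ j, |s j|) := by rw [← mul_sum]; ring
    _ ≤ freqDiam ν / 2 * √((N : ℝ)⁻¹ * ∑ j, s j ^ 2) := by
        gcongr
        · linarith [freqDiam_nonneg ν]
        · exact avg_abs_le_sqrt_avg_sq s

end FrequencySpread

theorem orderParam_growth_estimate_general (N : ℕ) (κ : ℝ) (hκ : 0 < κ)
    (ν : Fin N → ℝ) (θ : ℝ → Fin N → ℝ) (hθ : IsKuramoto κ ν θ)
    (I : Set ℝ) (hI : ∀ t ∈ I, 0 < orderParam (θ t)) :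
    ∀ t ∈ I, ∃ r : ℝ,
      HasDerivAt (fun s => orderParam (θ s)) r t ∧
      ∀ φ : ℝ,
        ((N : ℂ)⁻¹ * ∑ j, Complex.exp (Complex.I * (θ t j : ℂ))
            = (orderParam (θ t) : ℂ) * Complex.exp (Complex.I * (φ : ℂ))) →
        κ * Real.sqrt ((N : ℝ)⁻¹ * ∑ k, Real.sin (θ t k - φ) ^ 2) *
            (orderParam (θ t) * Real.sqrt ((N : ℝ)⁻¹ * ∑ k, Real.sin (θ t k - φ) ^ 2)
              - freqDiam ν / (2 * κ)) ≤ r := by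
  intro t ht
  have hR := hI t ht
  refine ⟨_, hasDerivAt_orderParam (fun j => hθ j t) hR.ne', fun φ hφ => ?_⟩
  rw [inner_complexOrderParam_div_eq hφ hR.ne']
  simp_rw [kuramoto_field_eq_mean_field hφ]
  set R := orderParam (θ t)
  set Δ := (N : ℝ)⁻¹ * ∑ k, Real.sin (θ t k - φ) ^ 2
  have hmean : (N : ℝ)⁻¹ * ∑ k, Real.sin (θ t k - φ) = 0 := by
    simpa using avg_sin_sub_eq hφ φ
  have hdrift := avg_mul_le_freqDiam_half_mul_sqrt ν _ hmean
  have hrate : -((N : ℝ)⁻¹ * ∑ j, (ν j - κ * R * Real.sin (θ t j - φ)) * Real.sin (θ t j - φ))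
      = κ * R * Δ - (N : ℝ)⁻¹ * ∑ j, ν j * Real.sin (θ t j - φ) := by
    simp only [Δ, sub_mul, sum_sub_distrib, mul_assoc, ← mul_sum, sq]
    ring
  have hΔ : √Δ ^ 2 = Δ := Real.sq_sqrt (by positivity)
  calc κ * √Δ * (R * √Δ - freqDiam ν / (2 * κ)) = κ * R * √Δ ^ 2 - freqDiam ν / 2 * √Δ := by
        field_simp
    _ ≤ _ := by rw [hΔ, hrate]; linarith

/-- Growth estimate for the order parameter (Lemma 2.1):
on any interval where `R > 0`, `R` is differentiable and
`R'(t) ≥ κ √Δ(t) (R(t) √Δ(t) − D(Ω)/(2κ))`, where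
`Δ(t) = (1/N) ∑ₖ sin²(θₖ(t) − φ(t))` for any argument `φ(t)` of the centroid. -/
theorem orderParam_growth_estimate (N : ℕ) (hN : 1 ≤ N) (κ : ℝ) (hκ : 0 < κ)
    (ν : Fin N → ℝ) (θ : ℝ → Fin N → ℝ) (hθ : IsKuramoto κ ν θ)
    (I : Set ℝ) (hI : ∀ t ∈ I, 0 < orderParam (θ t)) :
    ∀ t ∈ I, ∃ r : ℝ,
      HasDerivAt (fun s => orderParam (θ s)) r t ∧
      ∀ φ : ℝ,
        ((N : ℂ)⁻¹ * ∑ j, Complex.exp (Complex.I * (θ t j : ℂ))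
            = (orderParam (θ t) : ℂ) * Complex.exp (Complex.I * (φ : ℂ))) →
        κ * Real.sqrt ((N : ℝ)⁻¹ * ∑ k, Real.sin (θ t k - φ) ^ 2) *
            (orderParam (θ t) * Real.sqrt ((N : ℝ)⁻¹ * ∑ k, Real.sin (θ t k - φ) ^ 2)
              - freqDiam ν / (2 * κ)) ≤ r :=
  orderParam_growth_estimate_general N κ hκ ν θ hθ I hI
end

section
/- Let κ ≥ 0, let A ⊆ B ⊆ {1,…,N} be index sets with |A| ≥ γ·N, let θ be a Kuramoto solution, and let t₀ be a time with D(Θ_A(t₀)) < 2π. If i, j ∈ A are indices attaining the minimum and maximum, respectively, of {θ_k(t₀) : k ∈ A}, then θ_j'(t₀) − θ_i'(t₀) ≤ D(Ω_B) − 2κ·sin(D(Θ_A(t₀))/2)·( γ·cos(D(Θ_A(t₀))/2) − (1−γ) ). -/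
/-- Diameter of a sub-ensemble: `max_{i,j ∈ A} |x i - x j|`. -/
noncomputable def diam {N : ℕ} (A : Finset (Fin N)) (x : Fin N → ℝ) : ℝ :=
  sSup {d : ℝ | ∃ i ∈ A, ∃ j ∈ A, d = |x i - x j|}

private lemma diam_bddAbove' {N : ℕ} (S : Finset (Fin N)) (x : Fin N → ℝ) :
    BddAbove {d : ℝ | ∃ i ∈ S, ∃ j ∈ S, d = |x i - x j|} := by
  apply Set.Finite.bddAbove
  apply Set.Finite.subset (((S ×ˢ S).image fun p => |x p.1 - x p.2|).finite_toSet)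
  rintro d ⟨a, ha, b, hb, rfl⟩
  exact Finset.mem_coe.2 (Finset.mem_image.2 ⟨(a, b), Finset.mem_product.2 ⟨ha, hb⟩, rfl⟩)

/-- Gronwall-type differential inequality for the diameter of a majority ensemble
(Lemma 4.1): if `i, j ∈ A` attain the minimum and maximum of `θ_k(t₀)` over `A`, then
`θⱼ'(t₀) − θᵢ'(t₀) ≤ D(Ω_B) − 2κ sin(D(Θ_A(t₀))/2)(γ cos(D(Θ_A(t₀))/2) − (1−γ))`. -/
theorem diam_gronwall (N : ℕ) (hN : 1 ≤ N) (κ : ℝ) (hκ : 0 ≤ κ) (γ : ℝ)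
    (ν : Fin N → ℝ) (A B : Finset (Fin N)) (hAB : A ⊆ B)
    (hcard : γ * N ≤ (A.card : ℝ))
    (θ : ℝ → Fin N → ℝ) (hθ : IsKuramoto κ ν θ)
    (t₀ : ℝ) (hD : diam A (θ t₀) < 2 * Real.pi)
    (i j : Fin N) (hi : i ∈ A) (hj : j ∈ A)
    (hmin : ∀ k ∈ A, θ t₀ i ≤ θ t₀ k)
    (hmax : ∀ k ∈ A, θ t₀ k ≤ θ t₀ j) :
    deriv (fun s => θ s j) t₀ - deriv (fun s => θ s i) t₀ ≤
      diam B ν - 2 * κ * Real.sin (diam A (θ t₀) / 2) *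
        (γ * Real.cos (diam A (θ t₀) / 2) - (1 - γ)) := by
  have hNpos : (0:ℝ) < (N:ℝ) := by exact_mod_cast Nat.lt_of_lt_of_le Nat.zero_lt_one hN
  have hij : θ t₀ i ≤ θ t₀ j := hmax i hi
  have hDeq : diam A (θ t₀) = θ t₀ j - θ t₀ i := by
    unfold diam
    apply le_antisymm
    · refine csSup_le ⟨_, ⟨i, hi, i, hi, rfl⟩⟩ ?_
      rintro d ⟨a, ha, b, hb, rfl⟩
      have h1 := hmin a ha; have h2 := hmin b hb
      have h3 := hmax a ha; have h4 := hmax b hb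
      rw [abs_sub_le_iff]; constructor <;> linarith
    · exact le_csSup (diam_bddAbove' A (θ t₀)) ⟨j, hj, i, hi, (abs_of_nonneg (by linarith)).symm⟩
  set D : ℝ := θ t₀ j - θ t₀ i with hDdef
  rw [hDeq] at hD ⊢
  have hDnn : 0 ≤ D := by linarith
  have hD2pi : D / 2 ≤ Real.pi := by linarith
  -- bound on natural frequencies
  have hνle : ν j - ν i ≤ diam B ν := by
    refine (le_abs_self _).trans (le_csSup (diam_bddAbove' B ν) ⟨j, hAB hj, i, hAB hi, rfl⟩)
  -- derivatives
  rw [(hθ j t₀).deriv, (hθ i t₀).deriv]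
  -- rewrite each sine difference
  set c : Fin N → ℝ := fun k => Real.cos ((θ t₀ k - θ t₀ j + (θ t₀ k - θ t₀ i)) / 2) with hc
  have hterm : ∀ k, Real.sin (θ t₀ k - θ t₀ j) - Real.sin (θ t₀ k - θ t₀ i)
      = -2 * Real.sin (D / 2) * c k := by
    intro k
    rw [Real.sin_sub_sin]
    have h : (θ t₀ k - θ t₀ j - (θ t₀ k - θ t₀ i)) / 2 = -(D / 2) := by rw [hDdef]; ring
    rw [h, Real.sin_neg]; ring
  have hsin : 0 ≤ Real.sin (D / 2) :=
    Real.sin_nonneg_of_nonneg_of_le_pi (by linarith) hD2pi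
  -- pointwise cosine bounds
  have hcosA : ∀ k ∈ A, Real.cos (D / 2) ≤ c k := by
    intro k hk
    have h1 := hmin k hk; have h2 := hmax k hk
    show Real.cos (D / 2) ≤ Real.cos ((θ t₀ k - θ t₀ j + (θ t₀ k - θ t₀ i)) / 2)
    rw [← Real.cos_abs ((θ t₀ k - θ t₀ j + (θ t₀ k - θ t₀ i)) / 2)]
    apply Real.cos_le_cos_of_nonneg_of_le_pi (abs_nonneg _) hD2pi
    rw [abs_le]
    constructor <;> linarith [hDdef.le, hDdef.ge]
  have hcosC : ∀ k, (-1 : ℝ) ≤ c k := fun k => Real.neg_one_le_cos _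
  -- sum lower bound
  have hsum : (N : ℝ) * (γ * Real.cos (D / 2) - (1 - γ)) ≤ ∑ k, c k := by
    have hdecomp : ∑ k ∈ Finset.univ \ A, c k + ∑ k ∈ A, c k = ∑ k, c k :=
      Finset.sum_sdiff (Finset.subset_univ A)
    have hA : (A.card : ℝ) * Real.cos (D / 2) ≤ ∑ k ∈ A, c k := by
      calc (A.card : ℝ) * Real.cos (D / 2) = ∑ _k ∈ A, Real.cos (D / 2) := by
            rw [Finset.sum_const, nsmul_eq_mul]
        _ ≤ ∑ k ∈ A, c k := Finset.sum_le_sum hcosA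
    have hC : -((N : ℝ) - A.card) ≤ ∑ k ∈ Finset.univ \ A, c k := by
      have hcardle : A.card ≤ N := by simpa using Finset.card_le_univ A
      calc -((N : ℝ) - A.card) = ∑ _k ∈ Finset.univ \ A, (-1 : ℝ) := by
            rw [Finset.sum_const, nsmul_eq_mul, Finset.card_sdiff_of_subset (Finset.subset_univ A),
              Finset.card_univ, Fintype.card_fin, Nat.cast_sub hcardle]
            ring
        _ ≤ _ := Finset.sum_le_sum (fun k _ => hcosC k)
    have hcos1 : (0:ℝ) ≤ Real.cos (D / 2) + 1 := by linarith [Real.neg_one_le_cos (D / 2)]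
    have hγ : γ * N * (Real.cos (D / 2) + 1) ≤ (A.card : ℝ) * (Real.cos (D / 2) + 1) :=
      mul_le_mul_of_nonneg_right hcard hcos1
    nlinarith [hdecomp, hA, hC]
  -- conclude
  have hfrac : γ * Real.cos (D / 2) - (1 - γ) ≤ (∑ k, c k) / N := by
    rw [le_div_iff₀ hNpos]; linarith [hsum]
  have hkey : κ / N * (∑ k, Real.sin (θ t₀ k - θ t₀ j))
      - κ / N * (∑ k, Real.sin (θ t₀ k - θ t₀ i))
      ≤ -(2 * κ * Real.sin (D / 2) * (γ * Real.cos (D / 2) - (1 - γ))) := by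
    have heq : κ / N * (∑ k, Real.sin (θ t₀ k - θ t₀ j))
        - κ / N * (∑ k, Real.sin (θ t₀ k - θ t₀ i))
        = -(2 * κ * Real.sin (D / 2)) * ((∑ k, c k) / N) := by
      rw [← mul_sub, ← Finset.sum_sub_distrib]
      rw [Finset.sum_congr rfl (fun k _ => hterm k), ← Finset.mul_sum]
      ring
    rw [heq]
    have hnp : -(2 * κ * Real.sin (D / 2)) ≤ 0 := by nlinarith [mul_nonneg hκ hsin]
    calc -(2 * κ * Real.sin (D / 2)) * ((∑ k, c k) / N)
        ≤ -(2 * κ * Real.sin (D / 2)) * (γ * Real.cos (D / 2) - (1 - γ)) :=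
          mul_le_mul_of_nonpos_left hfrac hnp
      _ = -(2 * κ * Real.sin (D / 2) * (γ * Real.cos (D / 2) - (1 - γ))) := by ring
  linarith [hνle, hkey]
end

section
/- Let γ ∈ (1/2, 1] and define f(x) := γ·sin x − 2(1−γ)·sin(x/2). Then: (1) f(0) = 0, f(2·arccos((1−γ)/γ)) = 0, and f(x) > 0 for all x in the open interval (0, 2·arccos((1−γ)/γ)); (2) f is strictly concave on (0, 2·arccos((1−γ)/γ)) (i.e., f''(x) < 0 there), and f attains its maximum over this interval at the unique critical point θ* := 2·arccos((1−γ+√((1−γ)²+8γ²))/(4γ)), which is the unique solution of f'(x) = 0 in (0, 2·arccos((1−γ)/γ)). -/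
/-!
Writing `f(x) = 2 sin(x/2) (γ cos(x/2) − (1−γ))`, the zeros and the sign of `f` on
`(0, 2 arccos((1−γ)/γ))` are read off from `cos(x/2) > (1−γ)/γ` there. In the variable
`u = cos(x/2)` one has `f'(x) = 2γu² − (1−γ)u − γ` and `f''(x) = sin(x/2) ((1−γ)/2 − 2γu)`,
so `f'' < 0` on the interval and `θ*` comes from the positive root of the quadratic. Strict
concavity then makes `θ*` the unique critical point and the maximiser.
-/

open Real Set

lemma ConcaveOn.isMaxOn_of_hasDerivAt_eq_zero {S : Set ℝ} {f : ℝ → ℝ} {x : ℝ}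
    (hf : ConcaveOn ℝ S f) (hx : x ∈ interior S) (hd : HasDerivAt f 0 x) : IsMaxOn f S x := by
  have hmin : IsMinOn (-f) S x :=
    hf.neg.isMinOn_of_rightDeriv_eq_zero hx <| by
      simpa using hd.neg.hasDerivWithinAt.derivWithin (uniqueDiffWithinAt_Ioi x)
  simpa using hmin.neg

lemma sin_half_pos_of_mem_Ioo_two_arccos {c x : ℝ} (hx : x ∈ Ioo 0 (2 * arccos c)) :
    0 < sin (x / 2) :=
  sin_pos_of_pos_of_lt_pi (by linarith [hx.1]) (by linarith [hx.2, arccos_le_pi c])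

lemma lt_cos_half_of_mem_Ioo_two_arccos {c x : ℝ} (hc : -1 ≤ c)
    (hx : x ∈ Ioo 0 (2 * arccos c)) : c < cos (x / 2) := by
  have hc₁ : c < 1 := arccos_pos.1 (by linarith [hx.1, hx.2])
  calc c = cos (arccos c) := (cos_arccos hc hc₁.le).symm
    _ < cos (x / 2) :=
      cos_lt_cos_of_nonneg_of_le_pi (by linarith [hx.1]) (arccos_le_pi c) (by linarith [hx.2])

namespace Kuramoto

noncomputable def coupling (γ x : ℝ) : ℝ := γ * sin x - 2 * (1 - γ) * sin (x / 2)

/-- The positive root of `2γu² − (1−γ)u − γ`, i.e. `cos(θ*/2)`. -/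
noncomputable def criticalCos (γ : ℝ) : ℝ := (1 - γ + √((1 - γ) ^ 2 + 8 * γ ^ 2)) / (4 * γ)

variable {γ x : ℝ}

lemma coupling_eq_mul (γ x : ℝ) :
    coupling γ x = 2 * sin (x / 2) * (γ * cos (x / 2) - (1 - γ)) := by
  have h := sin_two_mul (x / 2)
  rw [mul_div_cancel₀ x two_ne_zero] at h
  rw [coupling, h]
  ring

lemma continuous_coupling (γ : ℝ) : Continuous (coupling γ) := by
  unfold coupling
  fun_prop

lemma hasDerivAt_coupling (γ x : ℝ) :
    HasDerivAt (coupling γ) (γ * cos x - (1 - γ) * cos (x / 2)) x :=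
  (((hasDerivAt_sin x).const_mul γ).sub
    (((hasDerivAt_id' x).div_const 2).sin.const_mul (2 * (1 - γ)))).congr_deriv (by ring)

lemma deriv_coupling (γ : ℝ) :
    deriv (coupling γ) = fun x => γ * cos x - (1 - γ) * cos (x / 2) :=
  funext fun x => (hasDerivAt_coupling γ x).deriv

lemma hasDerivAt_deriv_coupling (γ x : ℝ) :
    HasDerivAt (deriv (coupling γ)) (sin (x / 2) * ((1 - γ) / 2 - 2 * γ * cos (x / 2))) x := by
  have h := sin_two_mul (x / 2)
  rw [mul_div_cancel₀ x two_ne_zero] at h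
  rw [deriv_coupling]
  exact (((hasDerivAt_cos x).const_mul γ).sub
    (((hasDerivAt_id' x).div_const 2).cos.const_mul (1 - γ))).congr_deriv (by rw [h]; ring)

lemma iteratedDeriv_two_coupling (γ x : ℝ) :
    iteratedDeriv 2 (coupling γ) x = sin (x / 2) * ((1 - γ) / 2 - 2 * γ * cos (x / 2)) := by
  rw [iteratedDeriv_succ, iteratedDeriv_one]
  exact (hasDerivAt_deriv_coupling γ x).deriv

lemma hasDerivAt_coupling_two_arccos {u : ℝ} (hu₀ : -1 ≤ u) (hu₁ : u ≤ 1) :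
    HasDerivAt (coupling γ) (2 * γ * u ^ 2 - (1 - γ) * u - γ) (2 * arccos u) := by
  convert hasDerivAt_coupling γ (2 * arccos u) using 1
  rw [cos_two_mul, mul_div_cancel_left₀ _ two_ne_zero, cos_arccos hu₀ hu₁]
  ring

lemma coupling_zero (γ : ℝ) : coupling γ 0 = 0 := by
  simp [coupling]

lemma neg_one_le_one_sub_div (hγ : 0 < γ) : -1 ≤ (1 - γ) / γ := by
  rw [le_div_iff₀ hγ]
  linarith

lemma one_sub_lt_mul_cos_half (hγ : 0 < γ) (hx : x ∈ Ioo 0 (2 * arccos ((1 - γ) / γ))) :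
    1 - γ < γ * cos (x / 2) := by
  have h := mul_lt_mul_of_pos_left (lt_cos_half_of_mem_Ioo_two_arccos
    (neg_one_le_one_sub_div hγ) hx) hγ
  rwa [mul_div_cancel₀ _ hγ.ne'] at h

lemma coupling_two_arccos (hγ : 1 / 2 ≤ γ) : coupling γ (2 * arccos ((1 - γ) / γ)) = 0 := by
  have hγ₀ : 0 < γ := by linarith
  have hc₁ : (1 - γ) / γ ≤ 1 := by
    rw [div_le_one hγ₀]
    linarith
  rw [coupling_eq_mul, mul_div_cancel_left₀ _ two_ne_zero,
    cos_arccos (neg_one_le_one_sub_div hγ₀) hc₁, mul_div_cancel₀ _ hγ₀.ne', sub_self, mul_zero]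

lemma coupling_pos (hγ : 0 < γ) (hx : x ∈ Ioo 0 (2 * arccos ((1 - γ) / γ))) :
    0 < coupling γ x := by
  rw [coupling_eq_mul]
  have := sin_half_pos_of_mem_Ioo_two_arccos hx
  have := one_sub_lt_mul_cos_half hγ hx
  have : 0 < γ * cos (x / 2) - (1 - γ) := by linarith
  positivity

lemma iteratedDeriv_two_coupling_neg (hγ : 0 < γ) (hγ₁ : γ ≤ 1)
    (hx : x ∈ Ioo 0 (2 * arccos ((1 - γ) / γ))) : iteratedDeriv 2 (coupling γ) x < 0 := by
  rw [iteratedDeriv_two_coupling]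
  have := one_sub_lt_mul_cos_half hγ hx
  exact mul_neg_of_pos_of_neg (sin_half_pos_of_mem_Ioo_two_arccos hx) (by linarith)

lemma strictConcaveOn_coupling (hγ : 0 < γ) (hγ₁ : γ ≤ 1) :
    StrictConcaveOn ℝ (Ioo 0 (2 * arccos ((1 - γ) / γ))) (coupling γ) := by
  refine strictConcaveOn_of_deriv2_neg (convex_Ioo _ _) (continuous_coupling γ).continuousOn ?_
  intro x hx
  rw [interior_Ioo] at hx
  rw [← iteratedDeriv_eq_iterate]
  exact iteratedDeriv_two_coupling_neg hγ hγ₁ hx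

lemma criticalCos_isRoot (hγ : 0 < γ) :
    2 * γ * criticalCos γ ^ 2 - (1 - γ) * criticalCos γ - γ = 0 := by
  have hs := sq_sqrt (show 0 ≤ (1 - γ) ^ 2 + 8 * γ ^ 2 by positivity)
  unfold criticalCos
  generalize √((1 - γ) ^ 2 + 8 * γ ^ 2) = s at hs
  field_simp
  linear_combination 2 * hs

lemma criticalCos_lt_one (hγ : 1 / 2 < γ) : criticalCos γ < 1 := by
  have hs := sq_sqrt (show 0 ≤ (1 - γ) ^ 2 + 8 * γ ^ 2 by positivity)
  have := sqrt_nonneg ((1 - γ) ^ 2 + 8 * γ ^ 2)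
  rw [criticalCos, div_lt_one (by linarith)]
  nlinarith

lemma div_lt_criticalCos (hγ : 1 / 2 < γ) : (1 - γ) / γ < criticalCos γ := by
  have hs := sq_sqrt (show 0 ≤ (1 - γ) ^ 2 + 8 * γ ^ 2 by positivity)
  have := sqrt_nonneg ((1 - γ) ^ 2 + 8 * γ ^ 2)
  have h3 : 3 * (1 - γ) < √((1 - γ) ^ 2 + 8 * γ ^ 2) := by
    nlinarith [mul_self_nonneg (3 * (1 - γ) - √((1 - γ) ^ 2 + 8 * γ ^ 2))]
  rw [criticalCos, div_lt_div_iff₀ (by linarith) (by linarith)]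
  nlinarith

lemma two_mul_arccos_criticalCos_mem_Ioo (hγ : 1 / 2 < γ) :
    2 * arccos (criticalCos γ) ∈ Ioo 0 (2 * arccos ((1 - γ) / γ)) := by
  have hc := neg_one_le_one_sub_div (show 0 < γ by linarith)
  have hu := div_lt_criticalCos hγ
  have hu₁ := criticalCos_lt_one hγ
  have := arccos_pos.2 hu₁
  have := strictAntiOn_arccos ⟨hc, by linarith⟩ ⟨by linarith, hu₁.le⟩ hu
  constructor <;> linarith

lemma hasDerivAt_coupling_criticalPoint (hγ : 1 / 2 < γ) :
    HasDerivAt (coupling γ) 0 (2 * arccos (criticalCos γ)) := by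
  have hu₀ : -1 ≤ criticalCos γ :=
    (neg_one_le_one_sub_div (by linarith)).trans (div_lt_criticalCos hγ).le
  convert hasDerivAt_coupling_two_arccos hu₀ (criticalCos_lt_one hγ).le using 1
  rw [criticalCos_isRoot (by linarith)]

end Kuramoto

open Kuramoto in
/-- Properties of `f(x) = γ sin x − 2(1−γ) sin(x/2)` for `γ ∈ (1/2, 1]` (Lemma 4.2):
zeros, positivity, strict concavity (with `f'' < 0`) on `(0, 2 arccos((1−γ)/γ))`,
and the unique interior critical point `θ* = 2 arccos((1−γ+√((1−γ)²+8γ²))/(4γ))`,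
at which `f` attains its maximum over the interval. -/
theorem kuramoto_coupling_function_properties (γ : ℝ) (hγ₁ : 1 / 2 < γ) (hγ₂ : γ ≤ 1)
    (f : ℝ → ℝ) (hf : ∀ x, f x = γ * Real.sin x - 2 * (1 - γ) * Real.sin (x / 2))
    (θs : ℝ)
    (hθs : θs = 2 * Real.arccos ((1 - γ + Real.sqrt ((1 - γ) ^ 2 + 8 * γ ^ 2)) / (4 * γ))) :
    -- (1) zeros and positivity
    (f 0 = 0 ∧ f (2 * Real.arccos ((1 - γ) / γ)) = 0 ∧
      ∀ x ∈ Set.Ioo 0 (2 * Real.arccos ((1 - γ) / γ)), 0 < f x) ∧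
    -- (2) strict concavity, f'' < 0, and the maximum at the unique critical point θ*
    (StrictConcaveOn ℝ (Set.Ioo 0 (2 * Real.arccos ((1 - γ) / γ))) f ∧
      (∀ x ∈ Set.Ioo 0 (2 * Real.arccos ((1 - γ) / γ)), iteratedDeriv 2 f x < 0) ∧
      θs ∈ Set.Ioo 0 (2 * Real.arccos ((1 - γ) / γ)) ∧
      deriv f θs = 0 ∧
      (∀ x ∈ Set.Ioo 0 (2 * Real.arccos ((1 - γ) / γ)), deriv f x = 0 → x = θs) ∧
      (∀ x ∈ Set.Ioo 0 (2 * Real.arccos ((1 - γ) / γ)), f x ≤ f θs)) := by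
  obtain rfl : f = coupling γ := funext hf
  subst hθs
  have hγ₀ : 0 < γ := by linarith
  have hconc := strictConcaveOn_coupling hγ₀ hγ₂
  have hcrit := hasDerivAt_coupling_criticalPoint hγ₁
  have hθ := two_mul_arccos_criticalCos_mem_Ioo hγ₁
  refine ⟨⟨coupling_zero γ, coupling_two_arccos hγ₁.le, fun x hx => coupling_pos hγ₀ hx⟩, hconc,
    fun x hx => iteratedDeriv_two_coupling_neg hγ₀ hγ₂ hx, hθ, hcrit.deriv, ?_, ?_⟩
  · intro x hx hx₀
    exact (hconc.strictAntiOn_deriv fun y _ => (hasDerivAt_coupling γ y).differentiableAt).injOn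
      hx hθ (hx₀.trans hcrit.deriv.symm)
  · exact hconc.concaveOn.isMaxOn_of_hasDerivAt_eq_zero (by rwa [interior_Ioo]) hcrit
end

section
/- Let γ ∈ (1/2, 1], let f(x) := γ·sin x − 2(1−γ)·sin(x/2), let θ* := 2·arccos((1−γ+√((1−γ)²+8γ²))/(4γ)), let κ > 0 and D > 0 with D/κ < f(θ*), and let φ₁ denote the smallest solution of f(φ) = D/κ in the interval (0, 2·arccos((1−γ)/γ)). Then: (1) φ₁ < (3π/(4(2γ−1)))·(D/κ); (2) arccos((1−γ)/γ) ≤ θ*; (3) f(arccos((1−γ)/γ)) = ((2γ−1)^{3/2}/√(2γ))·((2−γ)/(√(γ/2)+(1−γ))). -/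
/-!
Writing `b = (1 - γ) / γ`, the factorisation `f x = 2 sin (x/2) (γ cos (x/2) - (1 - γ))` shows that
`f > 0` on `(0, 2 arccos b)`, and `f'' x = sin (x/2) ((1 - γ)/2 - 2γ cos (x/2)) < 0` there. As
`f 0 = 0 < D/κ < f θ*`, some root lies below `θ*`, so `φ₁ < θ*` and concavity gives
`f θ* / θ* ≤ f φ₁ / φ₁`, i.e. `φ₁ ≤ (θ* / f θ*) · D/κ`. With `t = θ*/2`,
`θ* / f θ* = (t / sin t) / (γ cos t - (1 - γ))`, which Jordan's inequality and
`cos t > (1 + γ)/(3γ)` bound by `3π / (4(2γ - 1))`. The other two claims follow from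
`cos θ* = b cos t` and the half-angle formulas at `arccos b`.
-/

open Real Set

theorem ConcaveOn.div_le_div_of_map_zero {s : Set ℝ} {g : ℝ → ℝ} (hg : ConcaveOn ℝ s g)
    (h0 : 0 ∈ s) (hg0 : g 0 = 0) {x y : ℝ} (hx : x ∈ s) (hy : y ∈ s) (hx0 : 0 < x)
    (hxy : x ≤ y) : g y / y ≤ g x / x := by
  have h := hg.slope_anti h0 ⟨hx, hx0.ne'⟩ ⟨hy, (hx0.trans_le hxy).ne'⟩ hxy
  simpa only [slope_def_field, hg0, sub_zero] using h

theorem Real.lt_cos_of_lt_arccos {b y : ℝ} (hb : -1 ≤ b) (hy0 : 0 ≤ y) (hy : y < arccos b) :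
    b < cos y := by
  have hb1 : b < 1 := arccos_pos.mp (hy0.trans_lt hy)
  calc b = cos (arccos b) := (cos_arccos hb hb1.le).symm
    _ < cos y := cos_lt_cos_of_nonneg_of_le_pi hy0 (arccos_le_pi b) hy

theorem Real.div_sin_le_pi_div_two {x : ℝ} (hx0 : 0 < x) (hx : x ≤ π / 2) : x / sin x ≤ π / 2 := by
  have h := mul_le_sin hx0.le hx
  have hsin : 0 < sin x := sin_pos_of_pos_of_lt_pi hx0 (by linarith [pi_pos])
  rw [div_le_iff₀ hsin]
  calc x = π / 2 * (2 / π * x) := by field_simp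
    _ ≤ π / 2 * sin x := by gcongr

noncomputable def kuramotoFun (γ x : ℝ) : ℝ := γ * sin x - 2 * (1 - γ) * sin (x / 2)

theorem continuous_kuramotoFun (γ : ℝ) : Continuous (kuramotoFun γ) := by
  unfold kuramotoFun; fun_prop

theorem kuramotoFun_zero (γ : ℝ) : kuramotoFun γ 0 = 0 := by
  simp [kuramotoFun]

theorem kuramotoFun_eq_mul (γ x : ℝ) :
    kuramotoFun γ x = 2 * sin (x / 2) * (γ * cos (x / 2) - (1 - γ)) := by
  have h : sin x = 2 * sin (x / 2) * cos (x / 2) := by rw [← sin_two_mul]; ring_nf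
  rw [kuramotoFun, h]
  ring

theorem one_sub_lt_mul_cos_half {γ x : ℝ} (hγ : 0 < γ) (hx0 : 0 ≤ x)
    (hx : x < 2 * arccos ((1 - γ) / γ)) : 1 - γ < γ * cos (x / 2) := by
  have hb : -1 ≤ (1 - γ) / γ := by rw [le_div_iff₀ hγ]; linarith
  have h := lt_cos_of_lt_arccos hb (by linarith) (by linarith : x / 2 < _)
  rwa [div_lt_iff₀' hγ] at h

theorem sin_half_pos_of_lt_two_mul_arccos {x b : ℝ} (hx0 : 0 < x) (hx : x < 2 * arccos b) :
    0 < sin (x / 2) :=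
  sin_pos_of_pos_of_lt_pi (by linarith) (by linarith [arccos_le_pi b])

theorem kuramotoFun_pos {γ x : ℝ} (hγ : 0 < γ) (hx : x ∈ Ioo 0 (2 * arccos ((1 - γ) / γ))) :
    0 < kuramotoFun γ x := by
  have hsin := sin_half_pos_of_lt_two_mul_arccos hx.1 hx.2
  have hcos := one_sub_lt_mul_cos_half hγ hx.1.le hx.2
  rw [kuramotoFun_eq_mul]
  exact mul_pos (by positivity) (by linarith)

theorem hasDerivAt_kuramotoFun (γ x : ℝ) :
    HasDerivAt (kuramotoFun γ) (γ * cos x - (1 - γ) * cos (x / 2)) x := by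
  have h := ((hasDerivAt_sin x).const_mul γ).sub
    (((hasDerivAt_id x).div_const 2).sin.const_mul (2 * (1 - γ)))
  exact h.congr_deriv (by simp only [id]; ring)

theorem deriv2_kuramotoFun (γ x : ℝ) :
    deriv^[2] (kuramotoFun γ) x = sin (x / 2) * ((1 - γ) / 2 - 2 * γ * cos (x / 2)) := by
  have h1 : deriv (kuramotoFun γ) = fun x => γ * cos x - (1 - γ) * cos (x / 2) :=
    funext fun x => (hasDerivAt_kuramotoFun γ x).deriv
  have h2 := ((hasDerivAt_cos x).const_mul γ).sub
    (((hasDerivAt_id x).div_const 2).cos.const_mul (1 - γ))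
  have h : sin x = 2 * sin (x / 2) * cos (x / 2) := by rw [← sin_two_mul]; ring_nf
  rw [Function.iterate_succ_apply, Function.iterate_one, h1]
  refine h2.deriv.trans ?_
  simp only [id, h]
  ring

theorem strictConcaveOn_kuramotoFun {γ : ℝ} (hγ₀ : 0 < γ) (hγ₁ : γ ≤ 1) :
    StrictConcaveOn ℝ (Icc 0 (2 * arccos ((1 - γ) / γ))) (kuramotoFun γ) := by
  refine strictConcaveOn_of_deriv2_neg (convex_Icc _ _) (continuous_kuramotoFun γ).continuousOn ?_
  intro x hx
  rw [interior_Icc] at hx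
  have hsin := sin_half_pos_of_lt_two_mul_arccos hx.1 hx.2
  have hcos := one_sub_lt_mul_cos_half hγ₀ hx.1.le hx.2
  rw [deriv2_kuramotoFun]
  exact mul_neg_of_pos_of_neg hsin (by linarith)

/-- The positive root of `2γc² - (1 - γ)c - γ = 0`, i.e. of `f' (2 arccos c) = 0`. -/
noncomputable def criticalCos (γ : ℝ) : ℝ := (1 - γ + √((1 - γ) ^ 2 + 8 * γ ^ 2)) / (4 * γ)

theorem criticalCos_quadratic {γ : ℝ} (hγ : γ ≠ 0) :
    γ * (2 * criticalCos γ ^ 2 - 1) = (1 - γ) * criticalCos γ := by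
  have hS := sq_sqrt (by positivity : 0 ≤ (1 - γ) ^ 2 + 8 * γ ^ 2)
  rw [criticalCos]
  set S := √((1 - γ) ^ 2 + 8 * γ ^ 2)
  field_simp
  linear_combination 2 * hS

theorem one_add_div_lt_criticalCos {γ : ℝ} (hγ : 1 / 2 < γ) :
    (1 + γ) / (3 * γ) < criticalCos γ := by
  have hS := sq_sqrt (by positivity : 0 ≤ (1 - γ) ^ 2 + 8 * γ ^ 2)
  have hS0 := sqrt_nonneg ((1 - γ) ^ 2 + 8 * γ ^ 2)
  rw [criticalCos, div_lt_div_iff₀ (by linarith) (by linarith)]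
  -- with `S` the square root, the claim is `7γ + 1 < 3S`, and `9S² - (7γ + 1)² = 8(2γ - 1)²`
  nlinarith [sq_nonneg (2 * γ - 1)]

theorem criticalCos_lt_one {γ : ℝ} (hγ : 1 / 2 < γ) : criticalCos γ < 1 := by
  have hS := sq_sqrt (by positivity : 0 ≤ (1 - γ) ^ 2 + 8 * γ ^ 2)
  have hS0 := sqrt_nonneg ((1 - γ) ^ 2 + 8 * γ ^ 2)
  rw [criticalCos, div_lt_one (by linarith)]
  nlinarith

theorem div_lt_criticalCos {γ : ℝ} (hγ : 1 / 2 < γ) : (1 - γ) / γ < criticalCos γ := by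
  refine lt_trans ?_ (one_add_div_lt_criticalCos hγ)
  rw [div_lt_div_iff₀ (by linarith) (by linarith)]
  nlinarith

theorem criticalCos_pos {γ : ℝ} (hγ : 1 / 2 < γ) : 0 < criticalCos γ :=
  lt_trans (by positivity) (one_add_div_lt_criticalCos hγ)

noncomputable def criticalAngle (γ : ℝ) : ℝ := 2 * arccos (criticalCos γ)

theorem cos_criticalAngle {γ : ℝ} (hγ : 1 / 2 < γ) :
    cos (criticalAngle γ) = (1 - γ) / γ * criticalCos γ := by
  have hc := criticalCos_quadratic (by linarith : γ ≠ 0)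
  rw [criticalAngle, cos_two_mul, cos_arccos (by linarith [criticalCos_pos hγ])
    (criticalCos_lt_one hγ).le]
  field_simp
  linear_combination hc

theorem criticalAngle_pos {γ : ℝ} (hγ : 1 / 2 < γ) : 0 < criticalAngle γ :=
  mul_pos two_pos (arccos_pos.mpr (criticalCos_lt_one hγ))

theorem criticalAngle_lt_two_mul_arccos {γ : ℝ} (hγ : 1 / 2 < γ) :
    criticalAngle γ < 2 * arccos ((1 - γ) / γ) := by
  have hb : -1 ≤ (1 - γ) / γ := by rw [le_div_iff₀ (by linarith)]; linarith
  have h := strictAntiOn_arccos ⟨hb, (div_lt_criticalCos hγ).le.trans (criticalCos_lt_one hγ).le⟩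
    ⟨by linarith [criticalCos_pos hγ], (criticalCos_lt_one hγ).le⟩ (div_lt_criticalCos hγ)
  rw [criticalAngle]
  linarith

theorem arccos_le_criticalAngle {γ : ℝ} (hγ₁ : 1 / 2 < γ) (hγ₂ : γ ≤ 1) :
    arccos ((1 - γ) / γ) ≤ criticalAngle γ := by
  have hb : 0 ≤ (1 - γ) / γ := div_nonneg (by linarith) (by linarith)
  have hc := criticalCos_pos hγ₁
  have hc1 := criticalCos_lt_one hγ₁
  have hb1 : (1 - γ) / γ < 1 := (div_lt_criticalCos hγ₁).trans hc1
  have hbc : (1 - γ) / γ * criticalCos γ ≤ (1 - γ) / γ := mul_le_of_le_one_right hb hc1.le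
  calc arccos ((1 - γ) / γ) ≤ arccos ((1 - γ) / γ * criticalCos γ) :=
        strictAntiOn_arccos.antitoneOn ⟨by nlinarith, hbc.trans hb1.le⟩ ⟨by linarith, hb1.le⟩ hbc
    _ = criticalAngle γ := by
        rw [← cos_criticalAngle hγ₁, arccos_cos (criticalAngle_pos hγ₁).le]
        rw [criticalAngle]
        linarith [arccos_le_pi_div_two.mpr hc.le]

theorem criticalAngle_div_kuramotoFun_lt {γ : ℝ} (hγ : 1 / 2 < γ) :
    criticalAngle γ / kuramotoFun γ (criticalAngle γ) < 3 * π / (4 * (2 * γ - 1)) := by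
  set t := arccos (criticalCos γ)
  have hc := criticalCos_pos hγ
  have ht0 : 0 < t := arccos_pos.mpr (criticalCos_lt_one hγ)
  have htπ : t ≤ π / 2 := arccos_le_pi_div_two.mpr hc.le
  have hsin : 0 < sin t := sin_pos_of_pos_of_lt_pi ht0 (by linarith [pi_pos])
  have hlower := one_add_div_lt_criticalCos hγ
  have hmargin : 2 * (2 * γ - 1) / 3 < γ * criticalCos γ - (1 - γ) := by
    rw [div_lt_iff₀ (by linarith)] at hlower
    linarith
  have hf : kuramotoFun γ (criticalAngle γ) = 2 * sin t * (γ * criticalCos γ - (1 - γ)) := by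
    rw [kuramotoFun_eq_mul, criticalAngle, mul_div_cancel_left₀ _ two_ne_zero,
      cos_arccos (by linarith) (criticalCos_lt_one hγ).le]
  calc criticalAngle γ / kuramotoFun γ (criticalAngle γ)
        = t / sin t / (γ * criticalCos γ - (1 - γ)) := by
        rw [hf]; change 2 * t / _ = _; field_simp
    _ ≤ π / 2 / (γ * criticalCos γ - (1 - γ)) := by
        gcongr ?_ / _
        · linarith
        · exact div_sin_le_pi_div_two ht0 htπ
    _ < π / 2 / (2 * (2 * γ - 1) / 3) := by
        gcongr
        linarith
    _ = 3 * π / (4 * (2 * γ - 1)) := by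
        field_simp; ring

theorem kuramotoFun_arccos {γ : ℝ} (hγ₁ : 1 / 2 < γ) (hγ₂ : γ ≤ 1) :
    kuramotoFun γ (arccos ((1 - γ) / γ)) =
      (2 * γ - 1) ^ ((3 : ℝ) / 2) / √(2 * γ) * ((2 - γ) / (√(γ / 2) + (1 - γ))) := by
  have hγ : 0 < γ := by linarith
  set α := arccos ((1 - γ) / γ)
  have hcos : cos α = (1 - γ) / γ :=
    cos_arccos (by rw [le_div_iff₀ hγ]; linarith) (by rw [div_le_one hγ]; linarith)
  have hα : α ≤ π := arccos_le_pi _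
  have hsin_half : sin (α / 2) = √(2 * γ - 1) / √(2 * γ) := by
    rw [sin_half_eq_sqrt (arccos_nonneg _) (by linarith [pi_pos]), hcos, ← sqrt_div' _ (by linarith)]
    congr 1
    field_simp
    ring
  have hcos_half : γ * cos (α / 2) = √(γ / 2) := by
    rw [cos_half (by linarith [arccos_nonneg ((1 - γ) / γ), pi_pos]) hα, hcos]
    calc γ * √((1 + (1 - γ) / γ) / 2) = √(γ ^ 2) * √((1 + (1 - γ) / γ) / 2) := by
          rw [sqrt_sq hγ.le]
      _ = √(γ / 2) := by
          rw [← sqrt_mul (sq_nonneg γ)]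
          congr 1
          field_simp
          ring
  have hpow : (2 * γ - 1) ^ ((3 : ℝ) / 2) = (2 * γ - 1) * √(2 * γ - 1) := by
    rw [show (3 : ℝ) / 2 = 1 + 1 / 2 by norm_num, rpow_add (by linarith), rpow_one,
      sqrt_eq_rpow]
  have hq := sq_sqrt (by linarith : 0 ≤ γ / 2)
  have hden : 0 < √(γ / 2) + (1 - γ) := by linarith [sqrt_pos.mpr (by linarith : 0 < γ / 2)]
  have h2γ : 0 < √(2 * γ) := sqrt_pos.mpr (by linarith)
  rw [kuramotoFun_eq_mul, hsin_half, hcos_half, hpow]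
  field_simp
  linear_combination 2 * √(2 * γ - 1) * hq

theorem kuramoto_root_estimates_general (γ : ℝ) (hγ₁ : 1 / 2 < γ) (hγ₂ : γ ≤ 1)
    (f : ℝ → ℝ) (hf : ∀ x, f x = γ * Real.sin x - 2 * (1 - γ) * Real.sin (x / 2))
    (θs : ℝ)
    (hθs : θs = 2 * Real.arccos ((1 - γ + Real.sqrt ((1 - γ) ^ 2 + 8 * γ ^ 2)) / (4 * γ)))
    (κ D : ℝ) (hDκ : D / κ < f θs)
    (φ₁ : ℝ) (hφ₁mem : φ₁ ∈ Set.Ioo 0 (2 * Real.arccos ((1 - γ) / γ)))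
    (hφ₁root : f φ₁ = D / κ)
    (hφ₁min : ∀ x ∈ Set.Ioo 0 (2 * Real.arccos ((1 - γ) / γ)), f x = D / κ → φ₁ ≤ x) :
    φ₁ < 3 * Real.pi / (4 * (2 * γ - 1)) * (D / κ) ∧
    Real.arccos ((1 - γ) / γ) ≤ θs ∧
    f (Real.arccos ((1 - γ) / γ)) =
      (2 * γ - 1) ^ ((3 : ℝ) / 2) / Real.sqrt (2 * γ) *
        ((2 - γ) / (Real.sqrt (γ / 2) + (1 - γ))) := by
  obtain rfl : f = kuramotoFun γ := funext hf
  obtain rfl : θs = criticalAngle γ := hθs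
  have hθ₀ := criticalAngle_pos hγ₁
  have hθα := criticalAngle_lt_two_mul_arccos hγ₁
  have hc : 0 < D / κ := hφ₁root ▸ kuramotoFun_pos (by linarith) hφ₁mem
  obtain ⟨x₀, hx₀, hfx₀⟩ := intermediate_value_Ioo hθ₀.le (continuous_kuramotoFun γ).continuousOn
    (by rw [kuramotoFun_zero]; exact ⟨hc, hDκ⟩)
  have hφθ : φ₁ < criticalAngle γ := (hφ₁min x₀ ⟨hx₀.1, hx₀.2.trans hθα⟩ hfx₀).trans_lt hx₀.2
  have hchord := (strictConcaveOn_kuramotoFun (by linarith) hγ₂).concaveOn.div_le_div_of_map_zero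
    ⟨le_rfl, hθ₀.le.trans hθα.le⟩ (kuramotoFun_zero γ) ⟨hφ₁mem.1.le, hφθ.le.trans hθα.le⟩
    ⟨hθ₀.le, hθα.le⟩ hφ₁mem.1 hφθ.le
  rw [hφ₁root, div_le_div_iff₀ hθ₀ hφ₁mem.1] at hchord
  refine ⟨?_, arccos_le_criticalAngle hγ₁ hγ₂, kuramotoFun_arccos hγ₁ hγ₂⟩
  calc φ₁ ≤ criticalAngle γ / kuramotoFun γ (criticalAngle γ) * (D / κ) := by
        rw [div_mul_eq_mul_div, le_div_iff₀ (hc.trans hDκ)]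
        linarith
    _ < 3 * π / (4 * (2 * γ - 1)) * (D / κ) :=
        mul_lt_mul_of_pos_right (criticalAngle_div_kuramotoFun_lt hγ₁) hc

/-- Estimates on the roots of `f(φ) = D/κ` (Lemma 4.3) for
`f(x) = γ sin x − 2(1−γ) sin(x/2)`, `γ ∈ (1/2, 1]`:
(1) the smallest root `φ₁` in `(0, 2 arccos((1−γ)/γ))` satisfies
`φ₁ < (3π/(4(2γ−1)))·(D/κ)`; (2) `arccos((1−γ)/γ) ≤ θ*`;
(3) `f(arccos((1−γ)/γ)) = ((2γ−1)^{3/2}/√(2γ))·((2−γ)/(√(γ/2)+(1−γ)))`. -/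
theorem kuramoto_root_estimates (γ : ℝ) (hγ₁ : 1 / 2 < γ) (hγ₂ : γ ≤ 1)
    (f : ℝ → ℝ) (hf : ∀ x, f x = γ * Real.sin x - 2 * (1 - γ) * Real.sin (x / 2))
    (θs : ℝ)
    (hθs : θs = 2 * Real.arccos ((1 - γ + Real.sqrt ((1 - γ) ^ 2 + 8 * γ ^ 2)) / (4 * γ)))
    (κ D : ℝ) (hκ : 0 < κ) (hD : 0 < D) (hDκ : D / κ < f θs)
    (φ₁ : ℝ) (hφ₁mem : φ₁ ∈ Set.Ioo 0 (2 * Real.arccos ((1 - γ) / γ)))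
    (hφ₁root : f φ₁ = D / κ)
    (hφ₁min : ∀ x ∈ Set.Ioo 0 (2 * Real.arccos ((1 - γ) / γ)), f x = D / κ → φ₁ ≤ x) :
    φ₁ < 3 * Real.pi / (4 * (2 * γ - 1)) * (D / κ) ∧
    Real.arccos ((1 - γ) / γ) ≤ θs ∧
    f (Real.arccos ((1 - γ) / γ)) =
      (2 * γ - 1) ^ ((3 : ℝ) / 2) / Real.sqrt (2 * γ) *
        ((2 - γ) / (Real.sqrt (γ / 2) + (1 - γ))) :=
  kuramoto_root_estimates_general γ hγ₁ hγ₂ f hf θs hθs κ D hDκ φ₁ hφ₁mem hφ₁root hφ₁min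
end

section
/- Let 0 < R₀ ≤ 1, let D ≥ 0, and let κ > 1.6·D/R₀². Define γ := 0.5 + (0.35/0.94)·R₀ and β := arccos(1 − (0.4/0.94)·R₀) if 0 < R₀ ≤ 0.94, and γ := 1 − 2.5·(1−R₀) and β := arccos(0.6) if 0.94 < R₀ ≤ 1. Then the following five conditions all hold: (a) 1/2 < γ ≤ 1; (b) 0 < β and cos β > 1/γ − 1; (c) κ > D/(2·sin β·(γ·cos β − (1−γ))); (d) either R₀ ≥ γ + (1−γ)·cos β, or 2γ + (D²/(4κ²R₀²))·(1/(1−cos β)) ≤ 1 + R₀; (e) D/κ < ((2γ−1)^{3/2}/√(2γ))·((2−γ)/(√(γ/2)+(1−γ))). -/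
/-!
Since `κ > 1.6 D / R₀²`, the margin `D / κ` is below `R₀² / 1.6`, so it suffices to check
(a)–(e) with `D / κ` replaced by `R₀² / 1.6`; this removes `D` and `κ` and leaves explicit
inequalities in `R₀` alone. In the range `R₀ ≤ 0.94` these follow from linear lower bounds on
`sin β`, `√(2γ - 1)` and `2√(γ/2) - 1`; in the range `R₀ > 0.94` we have `cos β = 0.6`,
`sin β = 0.8`, condition (d) holds with equality in its first alternative, and (c), (e)
reduce to polynomial inequalities on `[0.94, 1]`.
-/

namespace ParameterChoice

open Real

/-- The right-hand side of condition (e). -/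
noncomputable def rhsE (γ : ℝ) : ℝ :=
  (2 * γ - 1) ^ ((3 : ℝ) / 2) / √(2 * γ) * ((2 - γ) / (√(γ / 2) + (1 - γ)))

/-- In terms of `v = √(γ / 2)`: `2γ - 1 = (2v - 1)(2v + 1)`, `2 - γ = 2(1 - v)(1 + v)` and
`v + 1 - γ = (1 - v)(1 + 2v)`, so the denominator of `rhsE` cancels. -/
theorem rhsE_eq {γ : ℝ} (h₁ : 1 / 2 ≤ γ) (h₂ : γ ≤ 1) :
    rhsE γ = √(2 * γ - 1) * (2 * √(γ / 2) - 1) * (1 + 1 / √(γ / 2)) := by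
  have hrpow : (2 * γ - 1) ^ ((3 : ℝ) / 2) = √(2 * γ - 1) ^ 3 := by
    rw [show (3 : ℝ) / 2 = 1 / 2 * (3 : ℕ) by norm_num, rpow_mul (by linarith),
      ← sqrt_eq_rpow, rpow_natCast]
  have hsqrt : √(2 * γ) = 2 * √(γ / 2) := by
    rw [show 2 * γ = 2 ^ 2 * (γ / 2) by ring, sqrt_mul (by norm_num), sqrt_sq (by norm_num)]
  have hs : √(2 * γ - 1) ^ 2 = 2 * γ - 1 := sq_sqrt (by linarith)
  have hv : √(γ / 2) ^ 2 = γ / 2 := sq_sqrt (by linarith)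
  have hv₀ : 0 < √(γ / 2) := sqrt_pos.mpr (by linarith)
  rw [rhsE, hrpow, hsqrt]
  generalize √(2 * γ - 1) = s at hs ⊢
  generalize √(γ / 2) = v at hv hv₀ ⊢
  have hden : 0 < v + (1 - γ) := by nlinarith
  field_simp
  linear_combination (s * (2 - γ)) * hs - (s * (4 * v + 6 - 4 * γ)) * hv

theorem mul_mul_le_rhsE {γ a b w : ℝ} (hγ : γ ≤ 1) (hb : 0 ≤ b)
    (has : a ^ 2 ≤ 2 * γ - 1) (hbv : (1 + b) ^ 2 ≤ 2 * γ) (hw : 0 < w) (hvw : γ / 2 ≤ w ^ 2) :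
    a * b * (1 + 1 / w) ≤ rhsE γ := by
  have hγ₀ : 1 / 2 ≤ γ := by nlinarith
  rw [rhsE_eq hγ₀ hγ]
  have hv₀ : 0 < √(γ / 2) := sqrt_pos.mpr (by linarith)
  have hs : a ≤ √(2 * γ - 1) := le_sqrt_of_sq_le has
  have hv : b ≤ 2 * √(γ / 2) - 1 := by
    have : (1 + b) / 2 ≤ √(γ / 2) := le_sqrt_of_sq_le (by nlinarith)
    linarith
  have hvw' : √(γ / 2) ≤ w := sqrt_le_iff.mpr ⟨hw.le, hvw⟩
  have hinv : 1 / w ≤ 1 / √(γ / 2) := one_div_le_one_div_of_le hv₀ hvw'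
  gcongr
  exact mul_nonneg (sqrt_nonneg _) (hb.trans hv)

/-- Conditions (a)–(e) with the margin `D / κ` replaced by its upper bound `R₀² / 1.6`
(so that `D² / (4κ²R₀²)` becomes `R₀² / (4 · 1.6²)`). -/
def Admissible (R₀ γ β : ℝ) : Prop :=
  (1 / 2 < γ ∧ γ ≤ 1) ∧ (0 < β ∧ 1 / γ - 1 < cos β) ∧
    R₀ ^ 2 / 1.6 ≤ 2 * sin β * (γ * cos β - (1 - γ)) ∧
    (γ + (1 - γ) * cos β ≤ R₀ ∨
      cos β < 1 ∧ 2 * γ + R₀ ^ 2 / 10.24 * (1 / (1 - cos β)) ≤ 1 + R₀) ∧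
    R₀ ^ 2 / 1.6 ≤ rhsE γ

theorem pos_and_div_lt_of_div_lt {R₀ D κ : ℝ} (hR₀ : 0 < R₀) (hD : 0 ≤ D)
    (hκ : 1.6 * D / R₀ ^ 2 < κ) :
    0 < κ ∧ D / κ < R₀ ^ 2 / 1.6 := by
  have hκ₀ : 0 < κ := (by positivity : 0 ≤ 1.6 * D / R₀ ^ 2).trans_lt hκ
  refine ⟨hκ₀, ?_⟩
  rw [div_lt_iff₀ (by positivity)] at hκ
  rw [div_lt_div_iff₀ hκ₀ (by norm_num)]
  linarith

theorem Admissible.conditions {R₀ D κ γ β : ℝ} (h : Admissible R₀ γ β) (hR₀ : 0 < R₀)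
    (hD : 0 ≤ D) (hκ : 1.6 * D / R₀ ^ 2 < κ) :
    (1 / 2 < γ ∧ γ ≤ 1) ∧
    (0 < β ∧ 1 / γ - 1 < cos β) ∧
    (D / (2 * sin β * (γ * cos β - (1 - γ))) < κ) ∧
    (γ + (1 - γ) * cos β ≤ R₀ ∨
      2 * γ + D ^ 2 / (4 * κ ^ 2 * R₀ ^ 2) * (1 / (1 - cos β)) ≤ 1 + R₀) ∧
    (D / κ < (2 * γ - 1) ^ ((3 : ℝ) / 2) / √(2 * γ) *
      ((2 - γ) / (√(γ / 2) + (1 - γ)))) := by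
  obtain ⟨hκ₀, hδ⟩ := pos_and_div_lt_of_div_lt hR₀ hD hκ
  obtain ⟨ha, hb, hc, hd, he⟩ := h
  refine ⟨ha, hb, ?_, ?_, hδ.trans_le he⟩
  · have hpos : 0 < 2 * sin β * (γ * cos β - (1 - γ)) :=
      (by positivity : 0 < R₀ ^ 2 / 1.6).trans_le hc
    rw [div_lt_comm₀ hpos hκ₀]
    exact hδ.trans_le hc
  · refine hd.imp_right fun ⟨hcos, hle⟩ => le_trans ?_ hle
    have hsq : D ^ 2 / (4 * κ ^ 2 * R₀ ^ 2) ≤ R₀ ^ 2 / 10.24 := by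
      calc D ^ 2 / (4 * κ ^ 2 * R₀ ^ 2) = (D / κ) ^ 2 / (4 * R₀ ^ 2) := by field_simp
        _ ≤ (R₀ ^ 2 / 1.6) ^ 2 / (4 * R₀ ^ 2) := by gcongr
        _ = R₀ ^ 2 / 10.24 := by field_simp; norm_num
    have : 0 ≤ 1 / (1 - cos β) := one_div_nonneg.mpr (by linarith)
    gcongr

theorem admissible_of_le {R₀ : ℝ} (h₀ : 0 < R₀) (h : R₀ ≤ 0.94) :
    Admissible R₀ (0.5 + 0.35 / 0.94 * R₀) (arccos (1 - 0.4 / 0.94 * R₀)) := by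
  have hγ : (0.5 + 0.35 / 0.94 * R₀ : ℝ) = 1 / 2 + 35 / 94 * R₀ := by norm_num
  have hc : (1 - 0.4 / 0.94 * R₀ : ℝ) = 1 - 20 / 47 * R₀ := by norm_num
  rw [hγ, hc]
  have hcos : cos (arccos (1 - 20 / 47 * R₀)) = 1 - 20 / 47 * R₀ :=
    cos_arccos (by linarith) (by linarith)
  have hsin : 0.82 * R₀ ≤ sin (arccos (1 - 20 / 47 * R₀)) := by
    rw [sin_arccos]
    exact le_sqrt_of_sq_le (by nlinarith)
  refine ⟨⟨by linarith, by linarith⟩, ⟨arccos_pos.mpr (by linarith), ?_⟩, ?_, ?_, ?_⟩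
  · rw [hcos, sub_lt_iff_lt_add, div_lt_iff₀ (by linarith)]
    nlinarith
  · have hP : 18 / 47 * R₀ ≤ (1 / 2 + 35 / 94 * R₀) * cos (arccos (1 - 20 / 47 * R₀)) -
        (1 - (1 / 2 + 35 / 94 * R₀)) := by
      rw [hcos]; nlinarith
    have hnum : R₀ ^ 2 / 1.6 ≤ 2 * (0.82 * R₀) * (18 / 47 * R₀) := by
      norm_num; nlinarith [sq_nonneg R₀]
    refine hnum.trans ?_
    gcongr
    linarith
  · right
    rw [hcos, show 1 - (1 - 20 / 47 * R₀) = 20 / 47 * R₀ by ring]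
    refine ⟨by linarith, ?_⟩
    field_simp
    nlinarith
  · have hnum : R₀ ^ 2 / 1.6 ≤ 0.86 * R₀ * (0.32 * R₀) * (1 + 1 / 0.652) := by
      norm_num; nlinarith [sq_nonneg R₀]
    -- `√(2γ - 1) ≥ 0.86 R₀`, `2√(γ/2) - 1 ≥ 0.32 R₀` and `√(γ/2) ≤ 0.652`
    exact hnum.trans <| mul_mul_le_rhsE (by linarith) (by positivity) (by nlinarith)
      (by nlinarith) (by norm_num) (by nlinarith)

theorem admissible_of_gt {R₀ : ℝ} (h₀ : 0.94 < R₀) (h : R₀ ≤ 1) :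
    Admissible R₀ (1 - 2.5 * (1 - R₀)) (arccos 0.6) := by
  have hcos : cos (arccos 0.6) = 0.6 := cos_arccos (by norm_num) (by norm_num)
  have hsin : sin (arccos 0.6) = 0.8 := by
    rw [sin_arccos, show (1 - 0.6 ^ 2 : ℝ) = 0.8 ^ 2 by norm_num, sqrt_sq (by norm_num)]
  have hγ : (1 - 2.5 * (1 - R₀) : ℝ) = 5 / 2 * R₀ - 3 / 2 := by norm_num; ring
  rw [Admissible, hcos, hsin, hγ]
  norm_num at h₀
  have hmid : 0 ≤ (R₀ - 47 / 50) * (1 - R₀) := mul_nonneg (by linarith) (by linarith)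
  refine ⟨⟨by linarith, by linarith⟩, ⟨arccos_pos.mpr (by norm_num), ?_⟩, ?_, ?_, ?_⟩
  · rw [sub_lt_iff_lt_add, div_lt_iff₀ (by linarith)]
    norm_num; linarith
  · norm_num; nlinarith
  · left
    norm_num; linarith
  · have hnum : R₀ ^ 2 / 1.6 ≤
        (27 / 10 * R₀ - 171 / 100) * (9 / 5 * R₀ - 1391 / 1000) * (1 + 1 / 0.7072) := by
      norm_num; nlinarith [mul_nonneg hmid (by linarith : (0 : ℝ) ≤ R₀ - 47 / 50)]
    -- `√(2γ - 1) ≥ 2.7 R₀ - 1.71`, `2√(γ/2) - 1 ≥ 1.8 R₀ - 1.391` and `√(γ/2) ≤ 0.7072`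
    exact hnum.trans <| mul_mul_le_rhsE (by linarith) (by linarith) (by nlinarith)
      (by nlinarith) (by norm_num) (by nlinarith)

end ParameterChoice

/-- Lemma 5.3 (verification of the parameter choice): for `0 < R₀ ≤ 1`, `D ≥ 0`,
`κ > 1.6 D/R₀²`, with `γ = 0.5 + (0.35/0.94) R₀`, `β = arccos(1 − (0.4/0.94) R₀)`
when `R₀ ≤ 0.94` and `γ = 1 − 2.5(1−R₀)`, `β = arccos 0.6` when `R₀ > 0.94`,
conditions (a)-(e) of (A.1) all hold. -/
theorem parameter_choice_valid (R₀ D κ γ β : ℝ)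
    (hR₀pos : 0 < R₀) (hR₀le : R₀ ≤ 1) (hD : 0 ≤ D)
    (hκ : 1.6 * D / R₀ ^ 2 < κ)
    (hsmall : R₀ ≤ 0.94 →
      γ = 0.5 + 0.35 / 0.94 * R₀ ∧ β = Real.arccos (1 - 0.4 / 0.94 * R₀))
    (hbig : 0.94 < R₀ →
      γ = 1 - 2.5 * (1 - R₀) ∧ β = Real.arccos 0.6) :
    -- (a)
    (1 / 2 < γ ∧ γ ≤ 1) ∧
    -- (b)  β ∈ (0, arccos(1/γ − 1))
    (0 < β ∧ 1 / γ - 1 < Real.cos β) ∧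
    -- (c)
    (D / (2 * Real.sin β * (γ * Real.cos β - (1 - γ))) < κ) ∧
    -- (d)
    (γ + (1 - γ) * Real.cos β ≤ R₀ ∨
      2 * γ + D ^ 2 / (4 * κ ^ 2 * R₀ ^ 2) * (1 / (1 - Real.cos β)) ≤ 1 + R₀) ∧
    -- (e)
    (D / κ < (2 * γ - 1) ^ ((3 : ℝ) / 2) / Real.sqrt (2 * γ) *
      ((2 - γ) / (Real.sqrt (γ / 2) + (1 - γ)))) := by
  have hadm : ParameterChoice.Admissible R₀ γ β := by
    rcases le_or_gt R₀ 0.94 with hle | hgt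
    · obtain ⟨rfl, rfl⟩ := hsmall hle
      exact ParameterChoice.admissible_of_le hR₀pos hle
    · obtain ⟨rfl, rfl⟩ := hbig hgt
      exact ParameterChoice.admissible_of_gt hgt hR₀le
  exact hadm.conditions hR₀pos hD hκ
end

section
/- Define the Kuramoto vector field F : ℝ^N → ℝ^N by F_i(Θ) = ν_i + (κ/N)·∑_{j=1}^N sin(θ_j − θ_i), and define the order parameter R(Θ) := |(1/N)·∑_{j=1}^N exp(𝕚 θ_j)|. Then the divergence of F satisfies, for every Θ ∈ ℝ^N, ∑_{i=1}^N (∂F_i/∂θ_i)(Θ) = κ·(1 − N·R(Θ)²). -/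
open Finset Function

section
variable {ι : Type*} [Fintype ι]

theorem Complex.normSq_sum_exp_mul_I (x : ι → ℝ) :
    Complex.normSq (∑ j, Complex.exp (Complex.I * (x j : ℂ)))
      = ∑ i, ∑ j, Real.cos (x j - x i) := by
  have hsum : ∑ j, Complex.exp (Complex.I * (x j : ℂ))
      = ((∑ j, Real.cos (x j) : ℝ) : ℂ) + ((∑ j, Real.sin (x j) : ℝ) : ℂ) * Complex.I := by
    push_cast
    rw [sum_mul, ← sum_add_distrib]
    refine sum_congr rfl fun j _ => ?_
    rw [mul_comm, Complex.exp_mul_I]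
  simp only [hsum, Complex.normSq_add_mul_I, sq, sum_mul_sum, ← sum_add_distrib, Real.cos_sub]
  refine sum_congr rfl fun i _ => sum_congr rfl fun j _ => ?_
  ring

variable [DecidableEq ι]

theorem hasDerivAt_sum_sin_update_sub (θ : ι → ℝ) (i : ι) :
    HasDerivAt (fun s => ∑ j, Real.sin (update θ i s j - s))
      (1 - ∑ j, Real.cos (θ j - θ i)) (θ i) := by
  have hterm (j : ι) : HasDerivAt (fun s => Real.sin (update θ i s j - s))
      (Real.cos (θ j - θ i) * ((Pi.single i 1 : ι → ℝ) j - 1)) (θ i) := by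
    have := (hasDerivAt_pi.1 (hasDerivAt_update θ i (θ i)) j).sub (hasDerivAt_id (θ i))
    simpa using this.sin
  refine (HasDerivAt.fun_sum fun j _ => hterm j).congr_deriv ?_
  simp only [mul_sub, mul_one, sum_sub_distrib, Pi.single_apply, mul_ite, mul_zero, sum_ite_eq',
    mem_univ, if_true, sub_self, Real.cos_zero]

end

theorem orderParam_sq {N : ℕ} (x : Fin N → ℝ) :
    orderParam x ^ 2 = (∑ i, ∑ j, Real.cos (x j - x i)) / N ^ 2 := by
  rw [orderParam, Complex.sq_norm, map_mul, map_inv₀, Complex.normSq_natCast,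
    Complex.normSq_sum_exp_mul_I]
  ring

/-- Divergence identity (6.5) for the Kuramoto vector field:
`∑ᵢ ∂Fᵢ/∂θᵢ = κ (1 − N R(Θ)²)`. -/
theorem kuramoto_divergence (N : ℕ) (hN : 1 ≤ N) (κ : ℝ) (ν : Fin N → ℝ)
    (F : (Fin N → ℝ) → Fin N → ℝ)
    (hF : ∀ (Θ : Fin N → ℝ) (i : Fin N),
      F Θ i = ν i + κ / N * ∑ j, Real.sin (Θ j - Θ i)) :
    ∀ Θ : Fin N → ℝ,
      ∑ i, deriv (fun s => F (Function.update Θ i s) i) (Θ i)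
        = κ * (1 - N * orderParam Θ ^ 2) := by
  intro Θ
  have hN0 : (N : ℝ) ≠ 0 := Nat.cast_ne_zero.2 (by omega)
  have hderiv (i : Fin N) : deriv (fun s => F (update Θ i s) i) (Θ i)
      = κ / N * (1 - ∑ j, Real.cos (Θ j - Θ i)) := by
    simp only [hF, update_self]
    exact (((hasDerivAt_sum_sin_update_sub Θ i).const_mul (κ / N)).const_add (ν i)).deriv
  rw [sum_congr rfl fun i _ => hderiv i, ← mul_sum, sum_sub_distrib, orderParam_sq]
  simp only [sum_const, card_univ, Fintype.card_fin, nsmul_eq_mul, mul_one]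
  field_simp
end
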